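/- arXiv:2509.22577 — 3 statements merged into one kernel-verified Lean document; each statement's English description precedes it below -/
import Mathlib

section
/- Let X₁ and X₂ be independent discrete real-valued random variables, and let X₁′, X₂′ be independent copies of X₁, X₂ respectively (all four mutually independent). Then sup_z Pr[X₁+X₂=z] ≤ Pr[X₁=X₁′]^{1/2} · Pr[X₂=X₂′]^{1/2}. -/
open MeasureTheory ProbabilityTheory

open scoped ENNReal

/-- Cauchy–Schwarz inequality for `tsum` over a countable type with values in `ℝ≥0∞`. -/
lemma tsum_cauchy_schwarz_aux {ι : Type*} [Countable ι] [MeasurableSpace ι]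
    [MeasurableSingletonClass ι] (f g : ι → ℝ≥0∞) :
    ∑' i, f i * g i ≤
      (∑' i, f i ^ (2 : ℝ)) ^ (1/2 : ℝ) * (∑' i, g i ^ (2 : ℝ)) ^ (1/2 : ℝ) := by
  have h := ENNReal.lintegral_mul_le_Lp_mul_Lq (Measure.count : Measure ι)
    (Real.HolderConjugate.two_two : Real.HolderConjugate 2 2)
    (measurable_of_countable f).aemeasurable (measurable_of_countable g).aemeasurable
  simpa [lintegral_count] using h

lemma rpow_two_eq_mul_self (c : ℝ≥0∞) : c ^ (2 : ℝ) = c * c := by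
  rw [show (2 : ℝ) = ((2 : ℕ) : ℝ) by norm_num, ENNReal.rpow_natCast, sq]

theorem stmt1 {Ω : Type*} [MeasureSpace Ω] [IsProbabilityMeasure (ℙ : Measure Ω)]
    (X₁ X₂ X₁' X₂' : Ω → ℝ)
    (hm₁ : Measurable X₁) (hm₂ : Measurable X₂)
    (hm₁' : Measurable X₁') (hm₂' : Measurable X₂')
    (hindep : iIndepFun ![X₁, X₂, X₁', X₂'] ℙ)
    (hid₁ : IdentDistrib X₁ X₁' ℙ ℙ) (hid₂ : IdentDistrib X₂ X₂' ℙ ℙ)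
    (hc₁ : (Set.range X₁).Countable) (hc₂ : (Set.range X₂).Countable) :
    (⨆ z : ℝ, ℙ {ω | X₁ ω + X₂ ω = z}) ≤
      ℙ {ω | X₁ ω = X₁' ω} ^ (1/2 : ℝ) * ℙ {ω | X₂ ω = X₂' ω} ^ (1/2 : ℝ) := by
  set μ₁ : Measure ℝ := Measure.map X₁ ℙ with hμ₁def
  set μ₂ : Measure ℝ := Measure.map X₂ ℙ with hμ₂def
  haveI hprob₁ : IsProbabilityMeasure μ₁ := Measure.isProbabilityMeasure_map hm₁.aemeasurable
  haveI hprob₂ : IsProbabilityMeasure μ₂ := Measure.isProbabilityMeasure_map hm₂.aemeasurable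
  set S₁ : Set ℝ := Set.range X₁ with hS₁def
  set S₂ : Set ℝ := Set.range X₂ with hS₂def
  haveI : Countable ↥S₁ := hc₁.to_subtype
  haveI : Countable ↥S₂ := hc₂.to_subtype
  -- the measures vanish off their countable supports
  have hS₁null : μ₁ S₁ᶜ = 0 := by
    rw [hμ₁def, Measure.map_apply hm₁ hc₁.measurableSet.compl]
    have : X₁ ⁻¹' S₁ᶜ = ∅ := by ext ω; simp [hS₁def]
    simp [this]
  have hS₂null : μ₂ S₂ᶜ = 0 := by
    rw [hμ₂def, Measure.map_apply hm₂ hc₂.measurableSet.compl]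
    have : X₂ ⁻¹' S₂ᶜ = ∅ := by ext ω; simp [hS₂def]
    simp [this]
  have hmem₁ : ∀ᵐ x ∂μ₁, x ∈ S₁ := by
    rw [Filter.eventually_iff, mem_ae_iff]
    simpa using hS₁null
  have hmem₂ : ∀ᵐ x ∂μ₂, x ∈ S₂ := by
    rw [Filter.eventually_iff, mem_ae_iff]
    simpa using hS₂null
  have hb₂zero : ∀ y : ℝ, y ∉ S₂ → μ₂ {y} = 0 := by
    intro y hy
    have : ({y} : Set ℝ) ⊆ S₂ᶜ := by simpa using hy
    exact le_antisymm (hS₂null ▸ measure_mono this) zero_le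
  -- pairwise independence from the joint independence
  have h12 : IndepFun X₁ X₂ ℙ := by
    simpa using hindep.indepFun (show (0 : Fin 4) ≠ 1 by decide)
  have h13 : IndepFun X₁ X₁' ℙ := by
    simpa using hindep.indepFun (show (0 : Fin 4) ≠ 2 by decide)
  have h24 : IndepFun X₂ X₂' ℙ := by
    simpa using hindep.indepFun (show (1 : Fin 4) ≠ 3 by decide)
  -- joint laws are product measures
  have hmap12 : Measure.map (fun ω => (X₁ ω, X₂ ω)) ℙ = μ₁.prod μ₂ :=
    (indepFun_iff_map_prod_eq_prod_map_map hm₁.aemeasurable hm₂.aemeasurable).mp h12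
  have hmap13 : Measure.map (fun ω => (X₁ ω, X₁' ω)) ℙ = μ₁.prod μ₁ := by
    have := (indepFun_iff_map_prod_eq_prod_map_map hm₁.aemeasurable
      hm₁'.aemeasurable).mp h13
    rwa [← hid₁.map_eq] at this
  have hmap24 : Measure.map (fun ω => (X₂ ω, X₂' ω)) ℙ = μ₂.prod μ₂ := by
    have := (indepFun_iff_map_prod_eq_prod_map_map hm₂.aemeasurable
      hm₂'.aemeasurable).mp h24
    rwa [← hid₂.map_eq] at this
  -- Value of ℙ[X₁ = X₁']
  have hdiagmeas : MeasurableSet {p : ℝ × ℝ | p.1 = p.2} :=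
    measurableSet_eq_fun measurable_fst measurable_snd
  have hA : ℙ {ω | X₁ ω = X₁' ω} = ∑' x : S₁, μ₁ {(x : ℝ)} ^ (2 : ℝ) := by
    have h1 : ℙ {ω | X₁ ω = X₁' ω}
        = (μ₁.prod μ₁) {p : ℝ × ℝ | p.1 = p.2} := by
      rw [← hmap13, Measure.map_apply (hm₁.prodMk hm₁') hdiagmeas]
      rfl
    rw [h1, Measure.prod_apply hdiagmeas]
    have hfib : ∀ x : ℝ, (Prod.mk x ⁻¹' {p : ℝ × ℝ | p.1 = p.2}) = {x} := by
      intro x; ext y; simp [eq_comm]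
    simp_rw [hfib]
    have hres : ∫⁻ x, μ₁ {x} ∂μ₁ = ∫⁻ x in S₁, μ₁ {x} ∂μ₁ := by
      rw [Measure.restrict_eq_self_of_ae_mem hmem₁]
    rw [hres, lintegral_countable _ hc₁]
    exact tsum_congr fun x => (rpow_two_eq_mul_self _).symm
  have hB : ℙ {ω | X₂ ω = X₂' ω} = ∑' y : S₂, μ₂ {(y : ℝ)} ^ (2 : ℝ) := by
    have h1 : ℙ {ω | X₂ ω = X₂' ω}
        = (μ₂.prod μ₂) {p : ℝ × ℝ | p.1 = p.2} := by
      rw [← hmap24, Measure.map_apply (hm₂.prodMk hm₂') hdiagmeas]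
      rfl
    rw [h1, Measure.prod_apply hdiagmeas]
    have hfib : ∀ x : ℝ, (Prod.mk x ⁻¹' {p : ℝ × ℝ | p.1 = p.2}) = {x} := by
      intro x; ext y; simp [eq_comm]
    simp_rw [hfib]
    have hres : ∫⁻ x, μ₂ {x} ∂μ₂ = ∫⁻ x in S₂, μ₂ {x} ∂μ₂ := by
      rw [Measure.restrict_eq_self_of_ae_mem hmem₂]
    rw [hres, lintegral_countable _ hc₂]
    exact tsum_congr fun x => (rpow_two_eq_mul_self _).symm
  -- the sum of squares over all of ℝ equals the sum over S₂
  have hBfull : ∑' y : ℝ, μ₂ {y} ^ (2 : ℝ) = ∑' y : S₂, μ₂ {(y : ℝ)} ^ (2 : ℝ) := by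
    refine (tsum_subtype_eq_of_support_subset ?_).symm
    intro y hy
    simp only [Function.mem_support] at hy
    by_contra h
    exact hy (by rw [hb₂zero y h, ENNReal.zero_rpow_of_pos (by norm_num)])
  -- main bound for each z
  refine iSup_le fun z => ?_
  have hsz : MeasurableSet {p : ℝ × ℝ | p.1 + p.2 = z} :=
    (measurable_fst.add measurable_snd) (measurableSet_singleton z)
  have hPz : ℙ {ω | X₁ ω + X₂ ω = z}
      = ∑' x : S₁, μ₂ {z - (x : ℝ)} * μ₁ {(x : ℝ)} := by
    have h1 : ℙ {ω | X₁ ω + X₂ ω = z}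
        = (μ₁.prod μ₂) {p : ℝ × ℝ | p.1 + p.2 = z} := by
      rw [← hmap12, Measure.map_apply (hm₁.prodMk hm₂) hsz]
      rfl
    rw [h1, Measure.prod_apply hsz]
    have hfib : ∀ x : ℝ,
        (Prod.mk x ⁻¹' {p : ℝ × ℝ | p.1 + p.2 = z}) = {z - x} := by
      intro x; ext y
      simp only [Set.mem_preimage, Set.mem_setOf_eq, Set.mem_singleton_iff]
      constructor <;> intro h <;> linarith
    simp_rw [hfib]
    have hres : ∫⁻ x, μ₂ {z - x} ∂μ₁ = ∫⁻ x in S₁, μ₂ {z - x} ∂μ₁ := by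
      rw [Measure.restrict_eq_self_of_ae_mem hmem₁]
    rw [hres, lintegral_countable _ hc₁]
  rw [hPz]
  calc
    ∑' x : S₁, μ₂ {z - (x : ℝ)} * μ₁ {(x : ℝ)}
        = ∑' x : S₁, μ₁ {(x : ℝ)} * μ₂ {z - (x : ℝ)} :=
      tsum_congr fun x => mul_comm _ _
    _ ≤ (∑' x : S₁, μ₁ {(x : ℝ)} ^ (2 : ℝ)) ^ (1/2 : ℝ) *
        (∑' x : S₁, μ₂ {z - (x : ℝ)} ^ (2 : ℝ)) ^ (1/2 : ℝ) :=
      tsum_cauchy_schwarz_aux (fun x : S₁ => μ₁ {(x : ℝ)})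
        (fun x : S₁ => μ₂ {z - (x : ℝ)})
    _ ≤ ℙ {ω | X₁ ω = X₁' ω} ^ (1/2 : ℝ) * ℙ {ω | X₂ ω = X₂' ω} ^ (1/2 : ℝ) := by
      gcongr
      · rw [hA]
      · rw [hB, ← hBfull]
        have hinj : Function.Injective (fun x : S₁ => z - (x : ℝ)) := by
          intro x y hxy
          simp only [sub_right_inj] at hxy
          exact Subtype.ext hxy
        exact ENNReal.tsum_comp_le_tsum_of_injective hinj (fun y => μ₂ {y} ^ (2 : ℝ))
end

section
/- Let n ∈ ℕ, s ∈ {1,…,n}, α > 0, and let F be a collection of at least α·C(n,s) subsets of {1,…,n} each of size s. Then there exists a collection H of pairs (F,G), where F ∈ F and G ⊆ F with |G| = s−1, such that |H| ≥ (α/2)·s·C(n,s) and for each pair (F,G) ∈ H there are at least (α/2)(n−s+1) sets F′ ∈ F with (F′,G) ∈ H. -/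
open Finset

theorem stmt5 (n s : ℕ) (hs1 : 1 ≤ s) (hsn : s ≤ n) (α : ℝ) (hα : 0 < α)
    (F : Finset (Finset (Fin n)))
    (hcard : ∀ A ∈ F, A.card = s)
    (hF : α * (n.choose s : ℝ) ≤ F.card) :
    ∃ H : Finset (Finset (Fin n) × Finset (Fin n)),
      (∀ P ∈ H, P.1 ∈ F ∧ P.2 ⊆ P.1 ∧ P.2.card = s - 1) ∧
      (α / 2) * s * (n.choose s : ℝ) ≤ H.card ∧
      ∀ P ∈ H, (α / 2) * ((n : ℝ) - s + 1) ≤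
        ((F.filter (fun F' => (F', P.2) ∈ H)).card : ℝ) := by
  classical
  have hsr : (s:ℝ) ≤ n := by exact_mod_cast hsn
  have hns : (1:ℝ) ≤ (n:ℝ) - s + 1 := by linarith
  set T : ℝ := (α/2) * ((n:ℝ) - s + 1) with hTdef
  have hT0 : 0 ≤ T := by
    have : (0:ℝ) < (n:ℝ) - s + 1 := by linarith
    positivity
  set A : Finset (Finset (Fin n)) := (univ : Finset (Fin n)).powersetCard (s-1) with hAdef
  set E : Finset (Finset (Fin n) × Finset (Fin n)) :=
    (F ×ˢ A).filter (fun P => P.2 ⊆ P.1) with hEdef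
  set H : Finset (Finset (Fin n) × Finset (Fin n)) :=
    E.filter (fun P => T < ((F.filter (fun F' => P.2 ⊆ F')).card : ℝ)) with hHdef
  have memH : ∀ P, P ∈ H ↔ P.1 ∈ F ∧ P.2 ∈ A ∧ P.2 ⊆ P.1 ∧
      T < ((F.filter (fun F' => P.2 ⊆ F')).card : ℝ) := by
    intro P
    simp only [hHdef, hEdef, mem_filter, mem_product]
    tauto
  have memA : ∀ G : Finset (Fin n), G ∈ A ↔ G.card = s - 1 := by
    intro G; simp [hAdef, mem_powersetCard]
  refine ⟨H, ?_, ?_, ?_⟩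
  · intro P hP
    rw [memH] at hP
    exact ⟨hP.1, hP.2.2.1, (memA P.2).1 hP.2.1⟩
  · -- counting
    -- card of E
    have hEcard : E.card = s * F.card := by
      rw [card_eq_sum_card_fiberwise (f := fun P => P.1) (s := E) (t := F)
        (by intro P hP; rw [hEdef, mem_coe, mem_filter, mem_product] at hP; exact hP.1.1)]
      have hfib : ∀ a ∈ F, (E.filter (fun P => P.1 = a)).card = s := by
        intro a ha
        have : E.filter (fun P => P.1 = a) = (a.powersetCard (s-1)).image (fun G => (a, G)) := by
          ext P
          simp only [hEdef, mem_filter, mem_product, mem_image, mem_powersetCard]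
          constructor
          · rintro ⟨⟨⟨h1, h2⟩, h3⟩, h4⟩
            exact ⟨P.2, ⟨h4 ▸ h3, (memA P.2).1 h2⟩, by rw [← h4]⟩
          · rintro ⟨G, ⟨hG1, hG2⟩, rfl⟩
            exact ⟨⟨⟨ha, (memA G).2 hG2⟩, hG1⟩, rfl⟩
        rw [this, card_image_of_injective _ (by intro x y h; simpa using h),
          card_powersetCard, hcard a ha, Nat.choose_symm hs1, Nat.choose_one_right]
      rw [Finset.sum_congr rfl hfib, Finset.sum_const, smul_eq_mul, Nat.mul_comm]
    -- card of D := E \ H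
    set D : Finset (Finset (Fin n) × Finset (Fin n)) :=
      E.filter (fun P => ¬ T < ((F.filter (fun F' => P.2 ⊆ F')).card : ℝ)) with hDdef
    have hHD : H.card + D.card = E.card := by
      rw [hHdef, hDdef]; exact card_filter_add_card_filter_not _
    have hDcard : (D.card : ℝ) ≤ (A.card : ℝ) * T := by
      rw [card_eq_sum_card_fiberwise (f := fun P => P.2) (s := D) (t := A)
        (by intro P hP
            rw [hDdef, mem_coe, mem_filter, hEdef, mem_filter, mem_product] at hP
            exact hP.1.1.2)]
      push_cast
      calc (∑ G ∈ A, ((D.filter (fun P => P.2 = G)).card : ℝ))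
          ≤ ∑ G ∈ A, T := by
            apply Finset.sum_le_sum
            intro G hG
            by_cases hgood : T < ((F.filter (fun F' => G ⊆ F')).card : ℝ)
            · have : D.filter (fun P => P.2 = G) = ∅ := by
                rw [eq_empty_iff_forall_notMem]
                intro P hP
                simp only [hDdef, mem_filter] at hP
                exact hP.1.2 (hP.2 ▸ hgood)
              rw [this]; simpa using hT0
            · -- fiber injects into F.filter (G ⊆ ·)
              have hle : (D.filter (fun P => P.2 = G)).card ≤
                  (F.filter (fun F' => G ⊆ F')).card := by
                apply Finset.card_le_card_of_injOn (fun P => P.1)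
                · intro P hP
                  simp only [hDdef, mem_coe, mem_filter, hEdef, mem_product] at hP ⊢
                  exact ⟨hP.1.1.1.1, hP.2 ▸ hP.1.1.2⟩
                · intro P hP Q hQ h
                  simp only [mem_coe, mem_filter] at hP hQ
                  exact Prod.ext h (hP.2.trans hQ.2.symm)
              push_neg at hgood
              exact le_trans (by exact_mod_cast hle) hgood
        _ = (A.card : ℝ) * T := by rw [Finset.sum_const, nsmul_eq_mul]
    -- identity: s * C(n,s) = (n - s + 1) * C(n, s-1)
    have hid : (s : ℝ) * (n.choose s : ℝ) = ((n:ℝ) - s + 1) * (n.choose (s-1) : ℝ) := by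
      have h1 : n.choose s * s = n.choose (s-1) * (n - (s-1)) := by
        have := Nat.choose_succ_right_eq n (s-1)
        rwa [Nat.sub_add_cancel hs1] at this
      have h2 : ((n - (s-1) : ℕ) : ℝ) = (n:ℝ) - s + 1 := by
        have : s - 1 ≤ n := le_trans (Nat.sub_le s 1) hsn
        push_cast [Nat.cast_sub this, Nat.cast_sub hs1]
        ring
      have := congrArg (fun x : ℕ => (x : ℝ)) h1
      push_cast at this
      rw [h2] at this
      linarith
    have hAcard : (A.card : ℝ) = (n.choose (s-1) : ℝ) := by
      rw [hAdef, card_powersetCard, card_univ, Fintype.card_fin]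
    have hEreal : (s : ℝ) * F.card = (E.card : ℝ) := by
      rw [hEcard]; push_cast; ring
    have hHcard : (H.card : ℝ) = (E.card : ℝ) - (D.card : ℝ) := by
      have := hHD; push_cast [← this]; ring
    rw [hHcard]
    have hFs : α * s * (n.choose s : ℝ) ≤ (s:ℝ) * F.card := by
      have hs0 : (0:ℝ) ≤ s := Nat.cast_nonneg s
      nlinarith
    have hDT : (D.card : ℝ) ≤ (α/2) * s * (n.choose s : ℝ) := by
      calc (D.card : ℝ) ≤ (A.card : ℝ) * T := hDcard
        _ = (α/2) * (((n:ℝ) - s + 1) * (n.choose (s-1) : ℝ)) := by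
            rw [hAcard, hTdef]; ring
        _ = (α/2) * ((s:ℝ) * (n.choose s : ℝ)) := by rw [← hid]
        _ = (α/2) * s * (n.choose s : ℝ) := by ring
    rw [← hEreal]
    linarith
  · intro P hP
    rw [memH] at hP
    obtain ⟨hP1, hP2, hP3, hP4⟩ := hP
    have : F.filter (fun F' => (F', P.2) ∈ H) = F.filter (fun F' => P.2 ⊆ F') := by
      apply filter_congr
      intro F' hF'
      rw [memH]
      simp only [eq_iff_iff]
      constructor
      · rintro ⟨_, _, h, _⟩; exact h
      · intro h; exact ⟨hF', hP2, h, hP4⟩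
    rw [this]
    exact le_of_lt hP4
end

section
/- Let 0 < p < 1 and n ≥ 2 even. Let X₁,…,X_n be independent discrete real random variables and X₁′,…,X_n′ independent copies, with Pr[X_i = X_i′] ≤ p for all i. Then sup_z Pr[X₁+⋯+X_n = z] ≤ Pr[(X₁−X₁′)+⋯+(X_{n/2}−X_{n/2}′) = 0]^{1/2} · Pr[(X_{n/2+1}−X_{n/2+1}′)+⋯+(X_n−X_n′) = 0]^{1/2}. -/
open MeasureTheory ProbabilityTheory Finset

section helpers
open Function
open scoped ENNReal NNReal

lemma ennreal_cauchy_schwarz {ι : Type*} [Countable ι] (f g : ι → ℝ≥0∞) :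
    ∑' i, f i * g i ≤ (∑' i, f i ^ 2) ^ (1 / 2 : ℝ) * (∑' i, g i ^ 2) ^ (1 / 2 : ℝ) := by
  obtain ⟨e, he⟩ := Countable.exists_injective_nat ι
  have hext : ∀ (u v : ι → ℝ≥0∞) (n : ℕ),
      Function.extend e (fun i => u i * v i) 0 n
        = Function.extend e u 0 n * Function.extend e v 0 n := by
    intro u v n
    by_cases hn : ∃ i, e i = n
    · obtain ⟨i, rfl⟩ := hn
      simp [he.extend_apply]
    · simp [Function.extend_apply' _ _ _ hn]
  have h1 : ∑' i, f i * g i = ∑' n, Function.extend e f 0 n * Function.extend e g 0 n := by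
    rw [← tsum_extend_zero he (fun i => f i * g i)]
    exact tsum_congr (hext f g)
  have h2 : ∑' i, f i ^ 2 = ∑' n, Function.extend e f 0 n ^ 2 := by
    rw [← tsum_extend_zero he (fun i => f i ^ 2)]
    refine tsum_congr fun n => ?_
    simpa [sq] using hext f f n
  have h3 : ∑' i, g i ^ 2 = ∑' n, Function.extend e g 0 n ^ 2 := by
    rw [← tsum_extend_zero he (fun i => g i ^ 2)]
    refine tsum_congr fun n => ?_
    simpa [sq] using hext g g n
  rw [h1, h2, h3]
  have hconj : Real.HolderConjugate 2 2 := Real.holderConjugate_iff.mpr ⟨one_lt_two, by norm_num⟩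
  have H := ENNReal.lintegral_mul_le_Lp_mul_Lq (Measure.count : Measure ℕ) hconj
      (measurable_of_countable (Function.extend e f 0)).aemeasurable
      (measurable_of_countable (Function.extend e g 0)).aemeasurable
  simp only [Pi.mul_apply, lintegral_count] at H
  have h2' : ∀ x : ℝ≥0∞, x ^ (2 : ℝ) = x ^ 2 := fun x => by
    rw [show (2 : ℝ) = ((2 : ℕ) : ℝ) by norm_num, ENNReal.rpow_natCast]
  simpa [h2'] using H

lemma indepFun_sum_sum {Ω : Type*} [MeasureSpace Ω] {ι : Type*}
    (F : ι → Ω → ℝ) (hm : ∀ i, Measurable (F i))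
    (hindep : iIndepFun F ℙ)
    (S T : Finset ι) (hST : Disjoint S T) :
    IndepFun (fun ω => ∑ i ∈ S, F i ω) (fun ω => ∑ i ∈ T, F i ω) ℙ := by
  classical
  have key := (hindep.indepFun_finset S T hST hm).comp
    (Finset.measurable_sum Finset.univ fun (i : S) _ => measurable_pi_apply i)
    (Finset.measurable_sum Finset.univ fun (i : T) _ => measurable_pi_apply i)
  have e1 : ((fun v : (S → ℝ) => ∑ i, v i) ∘ fun ω (i : S) => F i ω)
      = fun ω => ∑ i ∈ S, F i ω := by
    funext ω
    exact Finset.sum_coe_sort S fun i => F i ω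
  have e2 : ((fun v : (T → ℝ) => ∑ i, v i) ∘ fun ω (i : T) => F i ω)
      = fun ω => ∑ i ∈ T, F i ω := by
    funext ω
    exact Finset.sum_coe_sort T fun i => F i ω
  rwa [e1, e2] at key

lemma identDistrib_sum_of_indep {Ω : Type*} [MeasureSpace Ω]
    [IsProbabilityMeasure (ℙ : Measure Ω)]
    {κ : Type*} (X X' : κ → Ω → ℝ)
    (hmeas : ∀ i, Measurable (X i)) (hmeas' : ∀ i, Measurable (X' i))
    (hid : ∀ i, IdentDistrib (X i) (X' i) ℙ ℙ)
    (hX : ∀ (j : κ) (A : Finset κ), j ∉ A → IndepFun (X j) (fun ω => ∑ i ∈ A, X i ω) ℙ)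
    (hX' : ∀ (j : κ) (A : Finset κ), j ∉ A → IndepFun (X' j) (fun ω => ∑ i ∈ A, X' i ω) ℙ)
    (A : Finset κ) :
    IdentDistrib (fun ω => ∑ i ∈ A, X i ω) (fun ω => ∑ i ∈ A, X' i ω) ℙ ℙ := by
  classical
  induction A using Finset.induction_on with
  | empty =>
    simp only [Finset.sum_empty]
    exact IdentDistrib.refl aemeasurable_const
  | @insert j A hj ih =>
    have hmS : Measurable fun ω => ∑ i ∈ A, X i ω :=
      Finset.measurable_sum A fun i _ => hmeas i
    have hmS' : Measurable fun ω => ∑ i ∈ A, X' i ω :=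
      Finset.measurable_sum A fun i _ => hmeas' i
    have hpair : IdentDistrib (fun ω => (X j ω, ∑ i ∈ A, X i ω))
        (fun ω => (X' j ω, ∑ i ∈ A, X' i ω)) ℙ ℙ := by
      refine ⟨((hmeas j).prodMk hmS).aemeasurable,
        ((hmeas' j).prodMk hmS').aemeasurable, ?_⟩
      rw [(indepFun_iff_map_prod_eq_prod_map_map (hmeas j).aemeasurable
            hmS.aemeasurable).1 (hX j A hj),
          (indepFun_iff_map_prod_eq_prod_map_map (hmeas' j).aemeasurable
            hmS'.aemeasurable).1 (hX' j A hj),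
          (hid j).map_eq, ih.map_eq]
    have h2 := hpair.comp (measurable_fst.add measurable_snd :
      Measurable fun p : ℝ × ℝ => p.1 + p.2)
    simp only [Finset.sum_insert hj]
    exact h2

lemma countable_range_sum {Ω ι : Type*} (f : ι → Ω → ℝ)
    (h : ∀ i, (Set.range (f i)).Countable) (A : Finset ι) :
    (Set.range fun ω => ∑ i ∈ A, f i ω).Countable := by
  classical
  induction A using Finset.induction_on with
  | empty =>
    simp only [Finset.sum_empty]
    refine (Set.countable_singleton 0).mono ?_
    rintro x ⟨ω, rfl⟩
    rfl
  | @insert j A hj ih =>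
    have hsub : (Set.range fun ω => ∑ i ∈ insert j A, f i ω) ⊆
        Set.image2 (· + ·) (Set.range (f j)) (Set.range fun ω => ∑ i ∈ A, f i ω) := by
      rintro x ⟨ω, rfl⟩
      simp only [Finset.sum_insert hj]
      exact Set.mem_image2_of_mem ⟨ω, rfl⟩ ⟨ω, rfl⟩
    exact ((h j).image2 ih _).mono hsub

lemma split_core {Ω : Type*} [MeasureSpace Ω] [IsProbabilityMeasure (ℙ : Measure Ω)]
    (Y Z Y' Z' : Ω → ℝ)
    (hmY : Measurable Y) (hmZ : Measurable Z) (hmY' : Measurable Y') (hmZ' : Measurable Z')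
    (hsc : (Set.range Y).Countable) (htc : (Set.range Z).Countable)
    (hYZ : IndepFun Y Z ℙ) (hYY' : IndepFun Y Y' ℙ) (hZZ' : IndepFun Z Z' ℙ)
    (hIdY : IdentDistrib Y Y' ℙ ℙ) (hIdZ : IdentDistrib Z Z' ℙ ℙ) (z : ℝ) :
    ℙ {ω | Y ω + Z ω = z} ≤
      ℙ {ω | Y ω = Y' ω} ^ (1 / 2 : ℝ) * ℙ {ω | Z ω = Z' ω} ^ (1 / 2 : ℝ) := by
  classical
  haveI := hsc.to_subtype
  haveI := htc.to_subtype
  set g : ℝ → ℝ≥0∞ := fun y => ℙ (Y ⁻¹' {y}) with hg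
  set h : ℝ → ℝ≥0∞ := fun u => ℙ (Z ⁻¹' {u}) with hh
  have hY'g : ∀ y, ℙ (Y' ⁻¹' {y}) = g y := by
    intro y
    rw [hg, ← Measure.map_apply hmY' (measurableSet_singleton y), ← hIdY.map_eq,
      Measure.map_apply hmY (measurableSet_singleton y)]
  have hZ'h : ∀ u, ℙ (Z' ⁻¹' {u}) = h u := by
    intro u
    rw [hh, ← Measure.map_apply hmZ' (measurableSet_singleton u), ← hIdZ.map_eq,
      Measure.map_apply hmZ (measurableSet_singleton u)]
  have hh0 : ∀ u, u ∉ Set.range Z → h u = 0 := by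
    intro u hu
    have : Z ⁻¹' {u} = ∅ := by
      ext ω
      simp only [Set.mem_preimage, Set.mem_singleton_iff, Set.mem_empty_iff_false, iff_false]
      exact fun hc => hu ⟨ω, hc⟩
    rw [hh]
    simp only [this, measure_empty]
  -- duplication identity for Y
  have hYY'eq : ℙ {ω | Y ω = Y' ω} = ∑' y : (Set.range Y), g y * g y := by
    have hset : {ω | Y ω = Y' ω}
        = ⋃ y : (Set.range Y), (Y ⁻¹' {(y : ℝ)} ∩ Y' ⁻¹' {(y : ℝ)}) := by
      ext ω
      simp only [Set.mem_setOf_eq, Set.mem_iUnion, Set.mem_inter_iff, Set.mem_preimage,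
        Set.mem_singleton_iff]
      constructor
      · intro h'
        exact ⟨⟨Y ω, Set.mem_range_self ω⟩, rfl, h'.symm⟩
      · rintro ⟨y, h1, h2⟩
        rw [h1, h2]
    have hd : Pairwise (Function.onFun Disjoint
        fun y : (Set.range Y) => Y ⁻¹' {(y : ℝ)} ∩ Y' ⁻¹' {(y : ℝ)}) := by
      intro y y' hne
      refine Set.disjoint_left.2 fun ω hω hω' => hne (Subtype.ext ?_)
      exact hω.1.symm.trans hω'.1
    have hm : ∀ y : (Set.range Y),
        MeasurableSet (Y ⁻¹' {(y : ℝ)} ∩ Y' ⁻¹' {(y : ℝ)}) := fun y =>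
      (hmY (measurableSet_singleton _)).inter (hmY' (measurableSet_singleton _))
    rw [hset, measure_iUnion hd hm]
    refine tsum_congr fun y => ?_
    rw [hYY'.measure_inter_preimage_eq_mul _ _ (measurableSet_singleton _)
        (measurableSet_singleton _), hY'g]
  -- duplication identity for Z, extended to ℝ
  have hZZ'eq : ℙ {ω | Z ω = Z' ω} = ∑' u : ℝ, h u * h u := by
    have hset : {ω | Z ω = Z' ω}
        = ⋃ u : (Set.range Z), (Z ⁻¹' {(u : ℝ)} ∩ Z' ⁻¹' {(u : ℝ)}) := by
      ext ω
      simp only [Set.mem_setOf_eq, Set.mem_iUnion, Set.mem_inter_iff, Set.mem_preimage,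
        Set.mem_singleton_iff]
      constructor
      · intro h'
        exact ⟨⟨Z ω, Set.mem_range_self ω⟩, rfl, h'.symm⟩
      · rintro ⟨u, h1, h2⟩
        rw [h1, h2]
    have hd : Pairwise (Function.onFun Disjoint
        fun u : (Set.range Z) => Z ⁻¹' {(u : ℝ)} ∩ Z' ⁻¹' {(u : ℝ)}) := by
      intro u u' hne
      refine Set.disjoint_left.2 fun ω hω hω' => hne (Subtype.ext ?_)
      exact hω.1.symm.trans hω'.1
    have hm : ∀ u : (Set.range Z),
        MeasurableSet (Z ⁻¹' {(u : ℝ)} ∩ Z' ⁻¹' {(u : ℝ)}) := fun u =>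
      (hmZ (measurableSet_singleton _)).inter (hmZ' (measurableSet_singleton _))
    rw [hset, measure_iUnion hd hm]
    have h1 : ∀ u : (Set.range Z),
        ℙ (Z ⁻¹' {(u : ℝ)} ∩ Z' ⁻¹' {(u : ℝ)}) = h (u : ℝ) * h (u : ℝ) := by
      intro u
      rw [hZZ'.measure_inter_preimage_eq_mul _ _ (measurableSet_singleton _)
          (measurableSet_singleton _), hZ'h]
    rw [tsum_congr h1, tsum_subtype (Set.range Z) (fun u => h u * h u)]
    refine tsum_congr fun u => ?_
    by_cases hu : u ∈ Set.range Z
    · rw [Set.indicator_of_mem hu]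
    · rw [Set.indicator_of_notMem hu, hh0 u hu, zero_mul]
  -- decomposition of the sum event
  have hdecomp : ℙ {ω | Y ω + Z ω = z} = ∑' y : (Set.range Y), g y * h (z - y) := by
    have hset : {ω | Y ω + Z ω = z}
        = ⋃ y : (Set.range Y), (Y ⁻¹' {(y : ℝ)} ∩ Z ⁻¹' {z - (y : ℝ)}) := by
      ext ω
      simp only [Set.mem_setOf_eq, Set.mem_iUnion, Set.mem_inter_iff, Set.mem_preimage,
        Set.mem_singleton_iff]
      constructor
      · intro h'
        exact ⟨⟨Y ω, Set.mem_range_self ω⟩, rfl, by rw [← h']; ring⟩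
      · rintro ⟨y, h1, h2⟩
        rw [h1, h2]; ring
    have hd : Pairwise (Function.onFun Disjoint
        fun y : (Set.range Y) => Y ⁻¹' {(y : ℝ)} ∩ Z ⁻¹' {z - (y : ℝ)}) := by
      intro y y' hne
      refine Set.disjoint_left.2 fun ω hω hω' => hne (Subtype.ext ?_)
      exact hω.1.symm.trans hω'.1
    have hm : ∀ y : (Set.range Y),
        MeasurableSet (Y ⁻¹' {(y : ℝ)} ∩ Z ⁻¹' {z - (y : ℝ)}) := fun y =>
      (hmY (measurableSet_singleton _)).inter (hmZ (measurableSet_singleton _))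
    rw [hset, measure_iUnion hd hm]
    refine tsum_congr fun y => ?_
    rw [hYZ.measure_inter_preimage_eq_mul _ _ (measurableSet_singleton _)
        (measurableSet_singleton _)]
  calc ℙ {ω | Y ω + Z ω = z} = ∑' y : (Set.range Y), g y * h (z - y) := hdecomp
    _ ≤ (∑' y : (Set.range Y), g (y : ℝ) ^ 2) ^ (1 / 2 : ℝ) *
        (∑' y : (Set.range Y), h (z - (y : ℝ)) ^ 2) ^ (1 / 2 : ℝ) :=
      ennreal_cauchy_schwarz _ _
    _ ≤ ℙ {ω | Y ω = Y' ω} ^ (1 / 2 : ℝ) * ℙ {ω | Z ω = Z' ω} ^ (1 / 2 : ℝ) := by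
      refine mul_le_mul' (ENNReal.rpow_le_rpow ?_ (by norm_num))
        (ENNReal.rpow_le_rpow ?_ (by norm_num))
      · rw [hYY'eq]
        exact le_of_eq (tsum_congr fun y => by rw [pow_two])
      · rw [hZZ'eq]
        have hinj : Function.Injective (fun y : (Set.range Y) => z - (y : ℝ)) := by
          intro a b hab
          apply Subtype.ext
          dsimp at hab
          linarith
        calc ∑' y : (Set.range Y), h (z - (y : ℝ)) ^ 2
            ≤ ∑' u : ℝ, h u ^ 2 :=
              ENNReal.tsum_comp_le_tsum_of_injective hinj fun u => h u ^ 2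
          _ = ∑' u : ℝ, h u * h u := tsum_congr fun u => by rw [pow_two]

end helpers

theorem stmt11 {Ω : Type*} [MeasureSpace Ω] [IsProbabilityMeasure (ℙ : Measure Ω)]
    (n : ℕ) (hn2 : 2 ≤ n) (hev : Even n) (p : ℝ) (hp0 : 0 < p) (hp1 : p < 1)
    (X X' : Fin n → Ω → ℝ)
    (hmeas : ∀ i, Measurable (X i)) (hmeas' : ∀ i, Measurable (X' i))
    (hindep : iIndepFun (Sum.elim X X') ℙ)
    (hid : ∀ i, IdentDistrib (X i) (X' i) ℙ ℙ)
    (hcount : ∀ i, (Set.range (X i)).Countable)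
    (hp : ∀ i, ℙ {ω | X i ω = X' i ω} ≤ ENNReal.ofReal p) :
    (⨆ z : ℝ, ℙ {ω | ∑ i, X i ω = z}) ≤
      ℙ {ω | ∑ i ∈ Finset.univ.filter (fun i : Fin n => (i : ℕ) < n / 2),
          (X i ω - X' i ω) = 0} ^ (1 / 2 : ℝ) *
      ℙ {ω | ∑ i ∈ Finset.univ.filter (fun i : Fin n => n / 2 ≤ (i : ℕ)),
          (X i ω - X' i ω) = 0} ^ (1 / 2 : ℝ) := by
  classical
  set A : Finset (Fin n) := Finset.univ.filter (fun i : Fin n => (i : ℕ) < n / 2) with hA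
  set B : Finset (Fin n) := Finset.univ.filter (fun i : Fin n => n / 2 ≤ (i : ℕ)) with hB
  have hmF : ∀ i : Fin n ⊕ Fin n, Measurable (Sum.elim X X' i) := by
    rintro (a | a)
    exacts [hmeas a, hmeas' a]
  have hsum_inl : ∀ (S : Finset (Fin n)) (ω : Ω),
      ∑ i ∈ S.map (Function.Embedding.inl), Sum.elim X X' i ω = ∑ i ∈ S, X i ω := by
    intro S ω
    rw [Finset.sum_map]
    simp
  have hsum_inr : ∀ (S : Finset (Fin n)) (ω : Ω),
      ∑ i ∈ S.map (Function.Embedding.inr), Sum.elim X X' i ω = ∑ i ∈ S, X' i ω := by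
    intro S ω
    rw [Finset.sum_map]
    simp
  have hIndep : ∀ (S T : Finset (Fin n ⊕ Fin n)), Disjoint S T →
      IndepFun (fun ω => ∑ i ∈ S, Sum.elim X X' i ω)
        (fun ω => ∑ i ∈ T, Sum.elim X X' i ω) ℙ :=
    fun S T h => indepFun_sum_sum _ hmF hindep S T h
  -- disjointness of A and B
  have hAB : Disjoint A B := by
    rw [Finset.disjoint_left]
    intro i hiA hiB
    rw [hA, Finset.mem_filter] at hiA
    rw [hB, Finset.mem_filter] at hiB
    omega
  -- independence of half sums
  have hYZ : IndepFun (fun ω => ∑ i ∈ A, X i ω) (fun ω => ∑ i ∈ B, X i ω) ℙ := by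
    have := hIndep (A.map (Function.Embedding.inl)) (B.map (Function.Embedding.inl))
      (by rwa [Finset.disjoint_map])
    have e1 : (fun ω => ∑ i ∈ A.map (Function.Embedding.inl), Sum.elim X X' i ω)
        = fun ω => ∑ i ∈ A, X i ω := funext fun ω => hsum_inl A ω
    have e2 : (fun ω => ∑ i ∈ B.map (Function.Embedding.inl), Sum.elim X X' i ω)
        = fun ω => ∑ i ∈ B, X i ω := funext fun ω => hsum_inl B ω
    rwa [e1, e2] at this
  have hdisj_lr : ∀ S T : Finset (Fin n),
      Disjoint (S.map (Function.Embedding.inl)) (T.map (Function.Embedding.inr)) := by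
    intro S T
    rw [Finset.disjoint_left]
    rintro x hx hx'
    rw [Finset.mem_map] at hx hx'
    obtain ⟨a, _, rfl⟩ := hx
    obtain ⟨b, _, hb⟩ := hx'
    simp at hb
  have hYY' : IndepFun (fun ω => ∑ i ∈ A, X i ω) (fun ω => ∑ i ∈ A, X' i ω) ℙ := by
    have := hIndep (A.map (Function.Embedding.inl)) (A.map (Function.Embedding.inr))
      (hdisj_lr A A)
    have e1 : (fun ω => ∑ i ∈ A.map (Function.Embedding.inl), Sum.elim X X' i ω)
        = fun ω => ∑ i ∈ A, X i ω := funext fun ω => hsum_inl A ω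
    have e2 : (fun ω => ∑ i ∈ A.map (Function.Embedding.inr), Sum.elim X X' i ω)
        = fun ω => ∑ i ∈ A, X' i ω := funext fun ω => hsum_inr A ω
    rwa [e1, e2] at this
  have hZZ' : IndepFun (fun ω => ∑ i ∈ B, X i ω) (fun ω => ∑ i ∈ B, X' i ω) ℙ := by
    have := hIndep (B.map (Function.Embedding.inl)) (B.map (Function.Embedding.inr))
      (hdisj_lr B B)
    have e1 : (fun ω => ∑ i ∈ B.map (Function.Embedding.inl), Sum.elim X X' i ω)
        = fun ω => ∑ i ∈ B, X i ω := funext fun ω => hsum_inl B ω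
    have e2 : (fun ω => ∑ i ∈ B.map (Function.Embedding.inr), Sum.elim X X' i ω)
        = fun ω => ∑ i ∈ B, X' i ω := funext fun ω => hsum_inr B ω
    rwa [e1, e2] at this
  -- single vs sum independence, for identical distribution of sums
  have hXind : ∀ (j : Fin n) (S : Finset (Fin n)), j ∉ S →
      IndepFun (X j) (fun ω => ∑ i ∈ S, X i ω) ℙ := by
    intro j S hjS
    have hd : Disjoint ({Sum.inl j} : Finset (Fin n ⊕ Fin n))
        (S.map (Function.Embedding.inl)) := by
      rw [Finset.disjoint_left]
      intro x hx hx'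
      rw [Finset.mem_singleton] at hx
      subst hx
      rw [Finset.mem_map] at hx'
      obtain ⟨a, ha, hae⟩ := hx'
      have : a = j := by simpa using hae
      exact hjS (this ▸ ha)
    have := hIndep {Sum.inl j} (S.map (Function.Embedding.inl)) hd
    have e1 : (fun ω => ∑ i ∈ ({Sum.inl j} : Finset (Fin n ⊕ Fin n)), Sum.elim X X' i ω)
        = X j := by
      funext ω
      simp
    have e2 : (fun ω => ∑ i ∈ S.map (Function.Embedding.inl), Sum.elim X X' i ω)
        = fun ω => ∑ i ∈ S, X i ω := funext fun ω => hsum_inl S ω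
    rwa [e1, e2] at this
  have hX'ind : ∀ (j : Fin n) (S : Finset (Fin n)), j ∉ S →
      IndepFun (X' j) (fun ω => ∑ i ∈ S, X' i ω) ℙ := by
    intro j S hjS
    have hd : Disjoint ({Sum.inr j} : Finset (Fin n ⊕ Fin n))
        (S.map (Function.Embedding.inr)) := by
      rw [Finset.disjoint_left]
      intro x hx hx'
      rw [Finset.mem_singleton] at hx
      subst hx
      rw [Finset.mem_map] at hx'
      obtain ⟨a, ha, hae⟩ := hx'
      have : a = j := by simpa using hae
      exact hjS (this ▸ ha)
    have := hIndep {Sum.inr j} (S.map (Function.Embedding.inr)) hd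
    have e1 : (fun ω => ∑ i ∈ ({Sum.inr j} : Finset (Fin n ⊕ Fin n)), Sum.elim X X' i ω)
        = X' j := by
      funext ω
      simp
    have e2 : (fun ω => ∑ i ∈ S.map (Function.Embedding.inr), Sum.elim X X' i ω)
        = fun ω => ∑ i ∈ S, X' i ω := funext fun ω => hsum_inr S ω
    rwa [e1, e2] at this
  have hIdY : IdentDistrib (fun ω => ∑ i ∈ A, X i ω) (fun ω => ∑ i ∈ A, X' i ω) ℙ ℙ :=
    identDistrib_sum_of_indep X X' hmeas hmeas' hid hXind hX'ind A
  have hIdZ : IdentDistrib (fun ω => ∑ i ∈ B, X i ω) (fun ω => ∑ i ∈ B, X' i ω) ℙ ℙ :=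
    identDistrib_sum_of_indep X X' hmeas hmeas' hid hXind hX'ind B
  -- rewrite the goal sets
  have hsetA : {ω | ∑ i ∈ A, (X i ω - X' i ω) = 0}
      = {ω | (fun ω => ∑ i ∈ A, X i ω) ω = (fun ω => ∑ i ∈ A, X' i ω) ω} := by
    ext ω
    simp only [Set.mem_setOf_eq, Finset.sum_sub_distrib, sub_eq_zero]
  have hsetB : {ω | ∑ i ∈ B, (X i ω - X' i ω) = 0}
      = {ω | (fun ω => ∑ i ∈ B, X i ω) ω = (fun ω => ∑ i ∈ B, X' i ω) ω} := by
    ext ω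
    simp only [Set.mem_setOf_eq, Finset.sum_sub_distrib, sub_eq_zero]
  rw [hsetA, hsetB]
  refine iSup_le fun z => ?_
  have hsplit : {ω | ∑ i, X i ω = z}
      = {ω | (fun ω => ∑ i ∈ A, X i ω) ω + (fun ω => ∑ i ∈ B, X i ω) ω = z} := by
    ext ω
    simp only [Set.mem_setOf_eq]
    have : ∑ i, X i ω = ∑ i ∈ A, X i ω + ∑ i ∈ B, X i ω := by
      rw [hA, hB]
      rw [show Finset.univ.filter (fun i : Fin n => n / 2 ≤ (i : ℕ))
          = Finset.univ.filter (fun i : Fin n => ¬ ((i : ℕ) < n / 2)) from by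
        apply Finset.filter_congr
        intro i _
        simp [not_lt]]
      exact (Finset.sum_filter_add_sum_filter_not Finset.univ _ _).symm
    rw [this]
  rw [hsplit]
  exact split_core _ _ _ _
    (Finset.measurable_sum A fun i _ => hmeas i)
    (Finset.measurable_sum B fun i _ => hmeas i)
    (Finset.measurable_sum A fun i _ => hmeas' i)
    (Finset.measurable_sum B fun i _ => hmeas' i)
    (countable_range_sum X hcount A)
    (countable_range_sum X hcount B)
    hYZ hYY' hZZ' hIdY hIdZ z
end
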